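/- The worst-case construction for the specialized greedy heuristics: let C ≥ 4 be an even integer, let S_0 = {σ_1, …, σ_C} be a set of C distinct symbols, and let a, b be two further distinct symbols not in S_0. For 1 ≤ i ≤ C/2, set S_i = (S_0 \ {σ_{2i−1}, σ_{2i}}) ∪ {a, b}, and for 0 ≤ i ≤ C/2 let T_i be the collection of all (C−1)-element subsets of S_i. Then the collections T_0, T_1, …, T_{C/2} are pairwise disjoint; set T = T_0 ∪ T_1 ∪ ⋯ ∪ T_{C/2}. Then: (i) (T_0, T_1, …, T_{C/2}) is a valid pagination of T for capacity C, with C/2 + 1 pages; (ii) T also admits a valid pagination with exactly 3C/2 pages, all of volume exactly C, namely: for each 1 ≤ i ≤ C/2, the two pages { S_0 \ {σ_{2i−1}}, S_i \ {b} } and { S_0 \ {σ_{2i}}, S_i \ {a} }, together with, for each 1 ≤ i ≤ C/2, one page consisting of the C − 2 tiles of T_i containing both a and b. Hence this family of instances admits a valid pagination with 3C/(C+2) times more pages than a pagination with C/2 + 1 pages. -/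

import Mathlib

open Finset

/-- The volume of a page (a finite set of tiles): the number of distinct symbols. -/
def volume {α : Type*} [DecidableEq α] (p : Finset (Finset α)) : ℕ := (p.sup id).card

/-- A pagination of `T`: a partition of `T` into nonempty pages. -/
def IsPagination {α : Type*} (T : Finset (Finset α)) (P : Finset (Finset (Finset α))) : Prop :=
  (∀ p ∈ P, p.Nonempty) ∧
  (∀ p ∈ P, ∀ q ∈ P, p ≠ q → Disjoint p q) ∧
  (∀ t : Finset α, t ∈ T ↔ ∃ p ∈ P, t ∈ p)

/-- A pagination is valid for capacity `C` if every page has volume at most `C`. -/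
def IsValidPagination {α : Type*} [DecidableEq α] (C : ℕ) (T : Finset (Finset α))
    (P : Finset (Finset (Finset α))) : Prop :=
  IsPagination T P ∧ ∀ p ∈ P, volume p ≤ C

section Construction

variable {α : Type*} [DecidableEq α]

/-- `symbSet C σ a b 0 = S_0 = {σ 1, …, σ C}`; for `i ≥ 1`,
`symbSet C σ a b i = S_i = (S_0 \ {σ (2i-1), σ (2i)}) ∪ {a, b}`. -/
def symbSet (C : ℕ) (σ : ℕ → α) (a b : α) (i : ℕ) : Finset α :=
  if i = 0 then (Finset.Icc 1 C).image σ
  else ((Finset.Icc 1 C).image σ \ {σ (2 * i - 1), σ (2 * i)}) ∪ {a, b}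

/-- `tileSet C σ a b i = T_i`: all `(C-1)`-element subsets of `S_i`. -/
def tileSet (C : ℕ) (σ : ℕ → α) (a b : α) (i : ℕ) : Finset (Finset α) :=
  (symbSet C σ a b i).powersetCard (C - 1)

/-- The whole instance `T = T_0 ∪ T_1 ∪ ⋯ ∪ T_{C/2}`. -/
def allTiles (C : ℕ) (σ : ℕ → α) (a b : α) : Finset (Finset α) :=
  (Finset.range (C / 2 + 1)).biUnion (tileSet C σ a b)

/-- The optimal pagination `(T_0, T_1, …, T_{C/2})`. -/
def optPages (C : ℕ) (σ : ℕ → α) (a b : α) : Finset (Finset (Finset α)) :=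
  (Finset.range (C / 2 + 1)).image (tileSet C σ a b)

/-- The locked page `{ S_0 \ {σ (2i-1)}, S_i \ {b} }`. -/
def pageA (C : ℕ) (σ : ℕ → α) (a b : α) (i : ℕ) : Finset (Finset α) :=
  {(symbSet C σ a b 0).erase (σ (2 * i - 1)), (symbSet C σ a b i).erase b}

/-- The locked page `{ S_0 \ {σ (2i)}, S_i \ {a} }`. -/
def pageB (C : ℕ) (σ : ℕ → α) (a b : α) (i : ℕ) : Finset (Finset α) :=
  {(symbSet C σ a b 0).erase (σ (2 * i)), (symbSet C σ a b i).erase a}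

/-- The page made of the `C - 2` tiles of `T_i` containing both `a` and `b`. -/
def pageAB (C : ℕ) (σ : ℕ → α) (a b : α) (i : ℕ) : Finset (Finset α) :=
  (tileSet C σ a b i).filter (fun s => a ∈ s ∧ b ∈ s)

/-- The non-optimal pagination with `3C/2` pages. -/
def badPages (C : ℕ) (σ : ℕ → α) (a b : α) : Finset (Finset (Finset α)) :=
  (Finset.Icc 1 (C / 2)).biUnion
    (fun i => {pageA C σ a b i, pageB C σ a b i, pageAB C σ a b i})

end Construction

/-! Two distinct symbol sets `S_i`, `S_j` share at most `C - 2` symbols, fewer than the `C - 1`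
of a tile, so the collections `T_i` are pairwise disjoint and the tile `S_i \ {x}` determines the
pair `(i, x)`. The second pagination is therefore the image of a partition of these index pairs:
`(0, σ (2i-1))` and `(i, b)` form one page, `(0, σ (2i))` and `(i, a)` another, and the pairs
`(i, x)` with `x ∉ {a, b}` a third. The first two pages span `S_0 \ {σ_k}` plus one of `a`, `b`;
the third spans `S_i`, since `S_i \ {a, b}` has at least two elements. -/

namespace Finset

variable {α : Type*} [DecidableEq α]

theorem powersetCard_card_sub_one {s : Finset α} (hs : s.Nonempty) :
    s.powersetCard (#s - 1) = s.image s.erase := by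
  have := hs.card_pos
  ext t
  simp only [mem_powersetCard, mem_image, ← covBy_iff_exists_erase, covBy_iff_card_sdiff_eq_one]
  constructor <;> rintro ⟨hts, h⟩ <;> refine ⟨hts, ?_⟩ <;>
    rw [card_sdiff_of_subset hts] at * <;> omega

theorem sup_image_erase {s t : Finset α} (ht : 1 < #t) : (t.image s.erase).sup id = s := by
  refine le_antisymm (Finset.sup_le ?_) fun x hx => ?_
  · simpa using fun y _ => erase_subset y s
  · obtain ⟨y, hy, hyx⟩ := exists_mem_ne ht x
    exact mem_sup.2 ⟨_, mem_image_of_mem _ hy, mem_erase.2 ⟨hyx.symm, hx⟩⟩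

theorem card_erase_union_of_subset_insert {s t : Finset α} {x u : α} (hx : x ∈ s) (hu : u ∉ s)
    (hut : u ∈ t) (hts : t ⊆ insert u (s.erase x)) : #(s.erase x ∪ t) = #s := by
  have hunion : s.erase x ∪ t = insert u (s.erase x) :=
    (union_subset (subset_insert _ _) hts).antisymm
      (insert_subset (mem_union_right _ hut) subset_union_left)
  rw [hunion, card_insert_of_notMem fun h => hu (mem_of_mem_erase h), card_erase_of_mem hx]
  have := card_pos.2 ⟨x, hx⟩
  omega

theorem card_image_of_pairwiseDisjoint {ι : Type*} {I : Finset ι} {F : ι → Finset α}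
    (hne : ∀ i ∈ I, (F i).Nonempty) (hF : (I : Set ι).PairwiseDisjoint F) :
    #(I.image F) = #I := by
  refine card_image_of_injOn fun i hi j hj h => by_contra fun hij => ?_
  have := hF hi hj hij
  rw [Function.onFun, h, disjoint_self, bot_eq_empty] at this
  exact (hne j hj).ne_empty this

end Finset

theorem Set.PairwiseDisjoint.finset_image_of_injOn {ι β γ : Type*} [DecidableEq β]
    [DecidableEq γ] {I : Finset ι} {F : ι → Finset β} {g : β → γ}
    (hF : (I : Set ι).PairwiseDisjoint F) (hg : Set.InjOn g (I.biUnion F)) :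
    (I : Set ι).PairwiseDisjoint fun i => (F i).image g := by
  intro i hi j hj hij
  simp only [Function.onFun, Finset.disjoint_left, Finset.mem_image, not_exists, not_and]
  rintro _ ⟨x, hx, rfl⟩ y hy hyx
  have hxy := hg (by simp only [coe_biUnion]; exact Set.mem_biUnion hi hx)
    (by simp only [coe_biUnion]; exact Set.mem_biUnion hj hy) hyx.symm
  exact Finset.disjoint_left.1 (hF hi hj hij) hx (hxy ▸ hy)

section Pagination

variable {α ι : Type*} [DecidableEq α]

theorem volume_pair (s t : Finset α) : volume {s, t} = #(s ∪ t) := by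
  simp [volume]

theorem volume_image_erase {s t : Finset α} (ht : 1 < #t) : volume (t.image s.erase) = #s := by
  rw [volume, Finset.sup_image_erase ht]

theorem isPagination_biUnion_image {I : Finset ι} {F : ι → Finset (Finset α)}
    (hne : ∀ i ∈ I, (F i).Nonempty) (hF : (I : Set ι).PairwiseDisjoint F) :
    IsPagination (I.biUnion F) (I.image F) := by
  refine ⟨by simpa using hne, ?_, fun t => by simp⟩
  simp only [mem_image]
  rintro _ ⟨i, hi, rfl⟩ _ ⟨j, hj, rfl⟩ hij
  exact hF hi hj fun h => hij (h ▸ rfl)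

end Pagination

section SymbolSets

variable {α : Type*} [DecidableEq α] {C : ℕ} {σ : ℕ → α} {a b : α} {i j : ℕ}

structure SymbolsDistinct (C : ℕ) (σ : ℕ → α) (a b : α) : Prop where
  injOn : Set.InjOn σ (Icc 1 C)
  a_ne_b : a ≠ b
  a_notMem : a ∉ (Icc 1 C).image σ
  b_notMem : b ∉ (Icc 1 C).image σ

theorem symbSet_zero : symbSet C σ a b 0 = (Icc 1 C).image σ := if_pos rfl

theorem symbSet_of_ne_zero (hi : i ≠ 0) :
    symbSet C σ a b i = ((Icc 1 C).image σ \ {σ (2 * i - 1), σ (2 * i)}) ∪ {a, b} :=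
  if_neg hi

theorem a_mem_symbSet (hi : i ≠ 0) : a ∈ symbSet C σ a b i := by
  simp [symbSet_of_ne_zero hi]

theorem b_mem_symbSet (hi : i ≠ 0) : b ∈ symbSet C σ a b i := by
  simp [symbSet_of_ne_zero hi]

theorem pair_mem_Icc (hi : i ∈ Icc 1 (C / 2)) : 2 * i - 1 ∈ Icc 1 C ∧ 2 * i ∈ Icc 1 C := by
  simp only [mem_Icc] at *
  omega

namespace SymbolsDistinct

variable (h : SymbolsDistinct C σ a b)
include h

theorem card_symbSet (hi : i ≤ C / 2) : #(symbSet C σ a b i) = C := by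
  rcases eq_or_ne i 0 with rfl | hi0
  · rw [symbSet_zero, card_image_of_injOn h.injOn, Nat.card_Icc, Nat.add_sub_cancel]
  obtain ⟨h1, h2⟩ := pair_mem_Icc (C := C) (mem_Icc.2 ⟨Nat.one_le_iff_ne_zero.2 hi0, hi⟩)
  have hpair : {σ (2 * i - 1), σ (2 * i)} ⊆ (Icc 1 C).image σ := by
    simp [insert_subset_iff, mem_image_of_mem σ h1, mem_image_of_mem σ h2]
  have hdisj : Disjoint ((Icc 1 C).image σ \ {σ (2 * i - 1), σ (2 * i)}) {a, b} := by
    simp [h.a_notMem, h.b_notMem]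
  rw [symbSet_of_ne_zero hi0, card_union_of_disjoint hdisj, card_sdiff_of_subset hpair,
    card_image_of_injOn h.injOn, card_pair (h.injOn.ne h1 h2 (by omega)), card_pair h.a_ne_b,
    Nat.card_Icc]
  have := (mem_Icc.1 h2).2
  omega

theorem card_symbSet_sdiff_pair (hi : i ∈ Icc 1 (C / 2)) :
    #(symbSet C σ a b i \ {a, b}) = C - 2 := by
  have hi0 : i ≠ 0 := Nat.one_le_iff_ne_zero.1 (mem_Icc.1 hi).1
  rw [card_sdiff_of_subset (by simp [insert_subset_iff, a_mem_symbSet hi0, b_mem_symbSet hi0]),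
    h.card_symbSet (mem_Icc.1 hi).2, card_pair h.a_ne_b]

theorem sigma_mem_symbSet_iff {k : ℕ} (hk : k ∈ Icc 1 C) (hi : i ∈ Icc 1 (C / 2)) :
    σ k ∈ symbSet C σ a b i ↔ k ≠ 2 * i - 1 ∧ k ≠ 2 * i := by
  obtain ⟨h1, h2⟩ := pair_mem_Icc hi
  have hσa : σ k ≠ a := fun e => h.a_notMem (e ▸ mem_image_of_mem σ hk)
  have hσb : σ k ≠ b := fun e => h.b_notMem (e ▸ mem_image_of_mem σ hk)
  rw [symbSet_of_ne_zero (Nat.one_le_iff_ne_zero.1 (mem_Icc.1 hi).1)]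
  simp [hσa, hσb, mem_image_of_mem σ hk, h.injOn.eq_iff hk h1, h.injOn.eq_iff hk h2]

theorem card_inter_symbSet_le (hi : i ≤ C / 2) (hj : j ≤ C / 2) (hij : i ≠ j) :
    #(symbSet C σ a b i ∩ symbSet C σ a b j) ≤ C - 2 := by
  wlog hj0 : j ≠ 0 generalizing i j
  · rw [inter_comm]
    exact this hj hi hij.symm (by omega)
  have hj' : j ∈ Icc 1 (C / 2) := mem_Icc.2 ⟨by omega, hj⟩
  obtain ⟨h1, h2⟩ := pair_mem_Icc hj'
  have hpair : {σ (2 * j - 1), σ (2 * j)} ⊆ symbSet C σ a b i := by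
    rcases eq_or_ne i 0 with rfl | hi0
    · simp [insert_subset_iff, symbSet_zero, mem_image_of_mem σ h1, mem_image_of_mem σ h2]
    have hi' : i ∈ Icc 1 (C / 2) := mem_Icc.2 ⟨by omega, hi⟩
    simp only [insert_subset_iff, singleton_subset_iff, h.sigma_mem_symbSet_iff h1 hi',
      h.sigma_mem_symbSet_iff h2 hi']
    omega
  have hout : Disjoint {σ (2 * j - 1), σ (2 * j)} (symbSet C σ a b j) := by
    simp [h.sigma_mem_symbSet_iff h1 hj', h.sigma_mem_symbSet_iff h2 hj']
  calc #(symbSet C σ a b i ∩ symbSet C σ a b j)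
      ≤ #(symbSet C σ a b i \ {σ (2 * j - 1), σ (2 * j)}) :=
        card_le_card fun x hx => mem_sdiff.2 ⟨(mem_inter.1 hx).1,
          fun hx' => disjoint_left.1 hout hx' (mem_inter.1 hx).2⟩
    _ = C - 2 := by
        rw [card_sdiff_of_subset hpair, h.card_symbSet hi, card_pair (h.injOn.ne h1 h2 (by omega))]

theorem disjoint_tileSet (hi : i ≤ C / 2) (hj : j ≤ C / 2) (hij : i ≠ j) :
    Disjoint (tileSet C σ a b i) (tileSet C σ a b j) := by
  refine disjoint_left.2 fun t hti htj => ?_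
  rw [tileSet, mem_powersetCard] at hti htj
  have := card_le_card (subset_inter hti.1 htj.1)
  have := h.card_inter_symbSet_le hi hj hij
  omega

theorem pairwiseDisjoint_tileSet :
    ((range (C / 2 + 1) : Finset ℕ) : Set ℕ).PairwiseDisjoint (tileSet C σ a b) :=
  fun _ hi _ hj => h.disjoint_tileSet (Nat.lt_succ_iff.1 (mem_range.1 hi))
    (Nat.lt_succ_iff.1 (mem_range.1 hj))

theorem erase_mem_tileSet {x : α} (hi : i ≤ C / 2) (hx : x ∈ symbSet C σ a b i) :
    (symbSet C σ a b i).erase x ∈ tileSet C σ a b i :=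
  mem_powersetCard.2 ⟨erase_subset _ _, by rw [card_erase_of_mem hx, h.card_symbSet hi]⟩

theorem tileSet_eq_image_erase (hC : 0 < C) (hi : i ≤ C / 2) :
    tileSet C σ a b i = (symbSet C σ a b i).image (symbSet C σ a b i).erase := by
  have hne : (symbSet C σ a b i).Nonempty := by rw [← card_pos, h.card_symbSet hi]; exact hC
  rw [tileSet]
  simpa only [h.card_symbSet hi] using Finset.powersetCard_card_sub_one hne

theorem volume_tileSet (hC : 2 ≤ C) (hi : i ≤ C / 2) : volume (tileSet C σ a b i) = C := by
  have hcard := h.card_symbSet hi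
  rw [h.tileSet_eq_image_erase (by omega) hi, volume_image_erase (by omega), hcard]

theorem tileSet_nonempty (hC : 0 < C) (hi : i ∈ range (C / 2 + 1)) :
    (tileSet C σ a b i).Nonempty := by
  have hi := Nat.lt_succ_iff.1 (mem_range.1 hi)
  rw [h.tileSet_eq_image_erase hC hi, image_nonempty, ← card_pos, h.card_symbSet hi]
  exact hC

theorem isValidPagination_optPages (hC : 2 ≤ C) :
    IsValidPagination C (allTiles C σ a b) (optPages C σ a b) := by
  refine ⟨isPagination_biUnion_image (fun i hi => h.tileSet_nonempty (by omega) hi)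
    h.pairwiseDisjoint_tileSet, ?_⟩
  simp only [optPages, forall_mem_image]
  exact fun i hi => (h.volume_tileSet hC (Nat.lt_succ_iff.1 (mem_range.1 hi))).le

theorem card_optPages (hC : 0 < C) : #(optPages C σ a b) = C / 2 + 1 := by
  rw [optPages, card_image_of_pairwiseDisjoint (fun i hi => h.tileSet_nonempty hC hi)
    h.pairwiseDisjoint_tileSet, card_range]

end SymbolsDistinct

end SymbolSets

section BadPages

variable {α : Type*} [DecidableEq α] {C : ℕ} {σ : ℕ → α} {a b : α} {i : ℕ}

/-- The index `(i, x)` stands for the tile `S_i \ {x}`. -/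
def tileAt (C : ℕ) (σ : ℕ → α) (a b : α) (p : ℕ × α) : Finset α :=
  (symbSet C σ a b p.1).erase p.2

def tileIndices (C : ℕ) (σ : ℕ → α) (a b : α) : Finset (ℕ × α) :=
  (range (C / 2 + 1)).biUnion fun j => {j} ×ˢ symbSet C σ a b j

/-- The indices of the tiles on `pageA i`, `pageB i` and `pageAB i`, for `k = 0, 1, 2`. -/
def badPageIndices (C : ℕ) (σ : ℕ → α) (a b : α) (q : ℕ × Fin 3) : Finset (ℕ × α) :=
  ![{(0, σ (2 * q.1 - 1)), (q.1, b)}, {(0, σ (2 * q.1)), (q.1, a)},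
    {q.1} ×ˢ (symbSet C σ a b q.1 \ {a, b})] q.2

def badPage (C : ℕ) (σ : ℕ → α) (a b : α) (q : ℕ × Fin 3) : Finset (Finset α) :=
  (badPageIndices C σ a b q).image (tileAt C σ a b)

theorem mem_tileIndices {j : ℕ} {x : α} :
    (j, x) ∈ tileIndices C σ a b ↔ j ≤ C / 2 ∧ x ∈ symbSet C σ a b j := by
  simp [tileIndices]

theorem badPageIndices_subset {q : ℕ × Fin 3} (hq : q.1 ∈ Icc 1 (C / 2)) :
    badPageIndices C σ a b q ⊆ tileIndices C σ a b := by
  obtain ⟨i, k⟩ := q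
  obtain ⟨h1, h2⟩ := pair_mem_Icc hq
  have hi : i ≤ C / 2 := (mem_Icc.1 hq).2
  have hi0 : i ≠ 0 := Nat.one_le_iff_ne_zero.1 (mem_Icc.1 hq).1
  rintro ⟨j, x⟩ hp
  rw [mem_tileIndices]
  fin_cases k <;> simp [badPageIndices] at hp
  · rcases hp with ⟨rfl, rfl⟩ | ⟨rfl, rfl⟩
    · exact ⟨Nat.zero_le _, by rw [symbSet_zero]; exact mem_image_of_mem σ h1⟩
    · exact ⟨hi, b_mem_symbSet hi0⟩
  · rcases hp with ⟨rfl, rfl⟩ | ⟨rfl, rfl⟩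
    · exact ⟨Nat.zero_le _, by rw [symbSet_zero]; exact mem_image_of_mem σ h2⟩
    · exact ⟨hi, a_mem_symbSet hi0⟩
  · obtain ⟨⟨hx, -⟩, rfl⟩ := hp
    exact ⟨hi, hx⟩

theorem exists_mem_badPageIndices (hE : Even C) {j : ℕ} {x : α} (hj : j ≤ C / 2)
    (hx : x ∈ symbSet C σ a b j) :
    ∃ q ∈ Icc 1 (C / 2) ×ˢ univ, (j, x) ∈ badPageIndices C σ a b q := by
  obtain ⟨c, hc⟩ := hE
  simp only [mem_product, mem_Icc, mem_univ, and_true]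
  obtain rfl | hj0 := eq_or_ne j 0
  · rw [symbSet_zero, mem_image] at hx
    obtain ⟨m, hm, rfl⟩ := hx
    rw [mem_Icc] at hm
    obtain ⟨i, rfl | rfl⟩ := Nat.even_or_odd' m
    · exact ⟨(i, 1), by omega, by simp [badPageIndices]⟩
    · have hodd : 2 * (i + 1) - 1 = 2 * i + 1 := by omega
      exact ⟨(i + 1, 0), by omega, by simp [badPageIndices, hodd]⟩
  · by_cases hxb : x = b
    · exact ⟨(j, 0), by omega, by simp [badPageIndices, hxb]⟩
    by_cases hxa : x = a
    · exact ⟨(j, 1), by omega, by simp [badPageIndices, hxa]⟩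
    · exact ⟨(j, 2), by omega, by simp [badPageIndices, hx, hxa, hxb]⟩

theorem biUnion_badPageIndices (hE : Even C) :
    (Icc 1 (C / 2) ×ˢ univ).biUnion (badPageIndices C σ a b) = tileIndices C σ a b := by
  refine (biUnion_subset.2 fun q hq => badPageIndices_subset (mem_product.1 hq).1).antisymm ?_
  rintro ⟨j, x⟩ hp
  obtain ⟨q, hq, hpq⟩ := exists_mem_badPageIndices hE (mem_tileIndices.1 hp).1
    (mem_tileIndices.1 hp).2
  exact mem_biUnion.2 ⟨q, hq, hpq⟩

namespace SymbolsDistinct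

variable (h : SymbolsDistinct C σ a b)
include h

theorem pairwiseDisjoint_badPageIndices :
    ((Icc 1 (C / 2) ×ˢ univ : Finset (ℕ × Fin 3)) : Set (ℕ × Fin 3)).PairwiseDisjoint
      (badPageIndices C σ a b) := by
  rintro ⟨i, k⟩ hq ⟨j, l⟩ hq' hne
  simp only [coe_product, Set.mem_prod, mem_coe, mem_Icc, coe_univ, Set.mem_univ, and_true]
    at hq hq'
  have hi0 : i ≠ 0 := by omega
  have hj0 : j ≠ 0 := by omega
  -- indices `(0, σ m)` are told apart by injectivity of `σ` on `[1, C]`, which the discharger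
  -- checks; all others by their first coordinate or by `a ≠ b`
  fin_cases k <;> fin_cases l <;>
    simp (disch := (simp only [coe_Icc, Set.mem_Icc]; omega)) [badPageIndices, Function.onFun,
      h.injOn.eq_iff, h.a_ne_b, h.a_ne_b.symm, hj0, hi0.symm, disjoint_product,
      -singleton_product] at hne ⊢ <;> omega

theorem injOn_tileAt : Set.InjOn (tileAt C σ a b) (tileIndices C σ a b) := by
  rintro ⟨i, x⟩ hp ⟨j, y⟩ hq hxy
  rw [mem_coe, mem_tileIndices] at hp hq
  dsimp only [tileAt] at hxy
  obtain rfl | hij := eq_or_ne i j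
  · rw [(symbSet C σ a b i).erase_injOn hp.2 hq.2 hxy]
  · exact absurd hxy fun e => disjoint_left.1 (h.disjoint_tileSet hp.1 hq.1 hij)
      (h.erase_mem_tileSet hp.1 hp.2) (e ▸ h.erase_mem_tileSet hq.1 hq.2)

theorem allTiles_eq_image_tileAt (hC : 0 < C) :
    allTiles C σ a b = (tileIndices C σ a b).image (tileAt C σ a b) := by
  rw [allTiles, tileIndices, biUnion_image]
  refine biUnion_congr rfl fun i hi => ?_
  rw [h.tileSet_eq_image_erase hC (Nat.lt_succ_iff.1 (mem_range.1 hi))]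
  ext t
  simp [tileAt]

theorem pageAB_eq_image_erase (hC : 0 < C) (hi : i ∈ Icc 1 (C / 2)) :
    pageAB C σ a b i = (symbSet C σ a b i \ {a, b}).image (symbSet C σ a b i).erase := by
  have hi0 : i ≠ 0 := Nat.one_le_iff_ne_zero.1 (mem_Icc.1 hi).1
  rw [pageAB, h.tileSet_eq_image_erase hC (mem_Icc.1 hi).2, filter_image]
  congr 1
  ext x
  simp [a_mem_symbSet hi0, b_mem_symbSet hi0, eq_comm]

theorem badPage_eq (hC : 0 < C) (hi : i ∈ Icc 1 (C / 2)) :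
    badPage C σ a b (i, 0) = pageA C σ a b i ∧ badPage C σ a b (i, 1) = pageB C σ a b i ∧
      badPage C σ a b (i, 2) = pageAB C σ a b i := by
  refine ⟨by simp [badPage, badPageIndices, tileAt, pageA],
    by simp [badPage, badPageIndices, tileAt, pageB], ?_⟩
  rw [h.pageAB_eq_image_erase hC hi]
  ext t
  simp [badPage, badPageIndices, tileAt]

theorem badPages_eq_image (hC : 0 < C) :
    badPages C σ a b = (Icc 1 (C / 2) ×ˢ univ).image (badPage C σ a b) := by
  ext p
  simp only [badPages, mem_biUnion, mem_insert, mem_singleton, mem_image, mem_product, mem_univ,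
    and_true, Prod.exists]
  constructor
  · rintro ⟨i, hi, hp⟩
    obtain ⟨hA, hB, hAB⟩ := h.badPage_eq hC hi
    rcases hp with rfl | rfl | rfl
    exacts [⟨i, 0, hi, hA⟩, ⟨i, 1, hi, hB⟩, ⟨i, 2, hi, hAB⟩]
  · rintro ⟨i, k, hi, rfl⟩
    obtain ⟨hA, hB, hAB⟩ := h.badPage_eq hC hi
    refine ⟨i, hi, ?_⟩
    fin_cases k <;> simp [hA, hB, hAB]

theorem volume_pageA (hi : i ∈ Icc 1 (C / 2)) : volume (pageA C σ a b i) = C := by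
  have hi0 : i ≠ 0 := Nat.one_le_iff_ne_zero.1 (mem_Icc.1 hi).1
  have hσ : σ (2 * i - 1) ∈ symbSet C σ a b 0 := by
    rw [symbSet_zero]; exact mem_image_of_mem σ (pair_mem_Icc hi).1
  have ha : a ∉ symbSet C σ a b 0 := by rw [symbSet_zero]; exact h.a_notMem
  rw [pageA, volume_pair, Finset.card_erase_union_of_subset_insert hσ ha
    (mem_erase.2 ⟨h.a_ne_b, a_mem_symbSet hi0⟩), h.card_symbSet (Nat.zero_le _)]
  intro y hy
  simp [symbSet_of_ne_zero hi0, symbSet_zero] at hy ⊢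
  tauto

theorem volume_pageB (hi : i ∈ Icc 1 (C / 2)) : volume (pageB C σ a b i) = C := by
  have hi0 : i ≠ 0 := Nat.one_le_iff_ne_zero.1 (mem_Icc.1 hi).1
  have hσ : σ (2 * i) ∈ symbSet C σ a b 0 := by
    rw [symbSet_zero]; exact mem_image_of_mem σ (pair_mem_Icc hi).2
  have hb : b ∉ symbSet C σ a b 0 := by rw [symbSet_zero]; exact h.b_notMem
  rw [pageB, volume_pair, Finset.card_erase_union_of_subset_insert hσ hb
    (mem_erase.2 ⟨h.a_ne_b.symm, b_mem_symbSet hi0⟩), h.card_symbSet (Nat.zero_le _)]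
  intro y hy
  simp [symbSet_of_ne_zero hi0, symbSet_zero] at hy ⊢
  tauto

theorem volume_pageAB (hC : 4 ≤ C) (hi : i ∈ Icc 1 (C / 2)) :
    volume (pageAB C σ a b i) = C := by
  have hcard := h.card_symbSet_sdiff_pair hi
  rw [h.pageAB_eq_image_erase (by omega) hi, volume_image_erase (by omega),
    h.card_symbSet (mem_Icc.1 hi).2]

theorem volume_badPage (hC : 4 ≤ C) {q : ℕ × Fin 3} (hq : q ∈ Icc 1 (C / 2) ×ˢ univ) :
    volume (badPage C σ a b q) = C := by
  obtain ⟨i, k⟩ := q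
  have hi := (mem_product.1 hq).1
  obtain ⟨hA, hB, hAB⟩ := h.badPage_eq (by omega) hi
  fin_cases k
  exacts [hA ▸ h.volume_pageA hi, hB ▸ h.volume_pageB hi, hAB ▸ h.volume_pageAB hC hi]

theorem badPage_nonempty (hC : 3 ≤ C) {q : ℕ × Fin 3} (hq : q ∈ Icc 1 (C / 2) ×ˢ univ) :
    (badPage C σ a b q).Nonempty := by
  obtain ⟨i, k⟩ := q
  have hi := (mem_product.1 hq).1
  refine image_nonempty.2 ?_
  fin_cases k
  · exact insert_nonempty _ _
  · exact insert_nonempty _ _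
  · refine (singleton_nonempty i).product (card_pos.1 ?_)
    rw [h.card_symbSet_sdiff_pair hi]
    omega

theorem pairwiseDisjoint_badPage :
    ((Icc 1 (C / 2) ×ˢ univ : Finset (ℕ × Fin 3)) : Set (ℕ × Fin 3)).PairwiseDisjoint
      (badPage C σ a b) :=
  h.pairwiseDisjoint_badPageIndices.finset_image_of_injOn <| h.injOn_tileAt.mono <|
    coe_subset.2 <| biUnion_subset.2 fun _ hq => badPageIndices_subset (mem_product.1 hq).1

theorem volume_of_mem_badPages (hC : 4 ≤ C) {p : Finset (Finset α)}
    (hp : p ∈ badPages C σ a b) : volume p = C := by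
  rw [h.badPages_eq_image (by omega), mem_image] at hp
  obtain ⟨q, hq, rfl⟩ := hp
  exact h.volume_badPage hC hq

theorem isValidPagination_badPages (hC : 4 ≤ C) (hE : Even C) :
    IsValidPagination C (allTiles C σ a b) (badPages C σ a b) := by
  refine ⟨?_, fun p hp => (h.volume_of_mem_badPages hC hp).le⟩
  have hT : allTiles C σ a b = (Icc 1 (C / 2) ×ˢ univ).biUnion (badPage C σ a b) := by
    rw [h.allTiles_eq_image_tileAt (by omega), ← biUnion_badPageIndices hE, biUnion_image]
    rfl
  rw [hT, h.badPages_eq_image (by omega)]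
  exact isPagination_biUnion_image (fun q hq => h.badPage_nonempty (by omega) hq)
    h.pairwiseDisjoint_badPage

theorem card_badPages (hC : 3 ≤ C) : #(badPages C σ a b) = C / 2 * 3 := by
  rw [h.badPages_eq_image (by omega), card_image_of_pairwiseDisjoint
    (fun q hq => h.badPage_nonempty hC hq) h.pairwiseDisjoint_badPage]
  simp

end SymbolsDistinct

end BadPages

/-- The worst-case construction for the specialized greedy heuristics: the `T_i` are
pairwise disjoint; `(T_0, …, T_{C/2})` is a valid pagination of `T` with `C/2 + 1`
pages; and `T` also admits a valid pagination with exactly `3C/2` pages, all of volume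
exactly `C` — whence the ratio `3C/(C+2)` between the two numbers of pages. -/
theorem stmt12 {α : Type*} [DecidableEq α] (C : ℕ) (hC : 4 ≤ C) (hE : Even C)
    (σ : ℕ → α) (a b : α) (hab : a ≠ b)
    (hσ : ∀ i ∈ Finset.Icc 1 C, ∀ j ∈ Finset.Icc 1 C, σ i = σ j → i = j)
    (ha : a ∉ (Finset.Icc 1 C).image σ) (hb : b ∉ (Finset.Icc 1 C).image σ) :
    (∀ i ∈ Finset.range (C / 2 + 1), ∀ j ∈ Finset.range (C / 2 + 1), i ≠ j →
      Disjoint (tileSet C σ a b i) (tileSet C σ a b j)) ∧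
    (IsValidPagination C (allTiles C σ a b) (optPages C σ a b) ∧
      (optPages C σ a b).card = C / 2 + 1) ∧
    (IsValidPagination C (allTiles C σ a b) (badPages C σ a b) ∧
      (badPages C σ a b).card = 3 * C / 2 ∧
      ∀ p ∈ badPages C σ a b, volume p = C) ∧
    ((3 * C / 2 : ℕ) : ℚ) = (3 * C : ℚ) / ((C : ℚ) + 2) * (((C / 2 : ℕ) : ℚ) + 1) := by
  have h : SymbolsDistinct C σ a b := ⟨hσ, hab, ha, hb⟩
  have h3 : 3 * C / 2 = C / 2 * 3 := by obtain ⟨c, rfl⟩ := hE; omega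
  refine ⟨fun i hi j hj => h.pairwiseDisjoint_tileSet hi hj,
    ⟨h.isValidPagination_optPages (by omega), h.card_optPages (by omega)⟩,
    ⟨h.isValidPagination_badPages hC hE, h3 ▸ h.card_badPages (by omega),
      fun p hp => h.volume_of_mem_badPages hC hp⟩, ?_⟩
  obtain ⟨c, rfl⟩ := hE
  have hhalf : (c + c) / 2 = c := by omega
  rw [h3, hhalf]
  push_cast
  field_simp
  ring
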